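/- Let A be a commutative K-algebra, D(A)_{[0]} := {δ ∈ D(A) : δ(1) = 0} (the annihilator of 1 ∈ A, a left ideal of D(A) with D(A) = A ⊕ D(A)_{[0]} as left A-modules), and D(A)*A := {Σ_j δ_j(a_j) : δ_j ∈ D(A)_{[0]}, a_j ∈ A}. Then: (i) the map 𝔞 ↦ 𝔞 + D(A)_{[0]} is a bijection from the set of D(A)-stable ideals of A containing D(A)*A onto the set of two-sided ideals of D(A) containing D(A)_{[0]}, with inverse I ↦ I ∩ A; (ii) the two-sided ideal D(A)·D(A)_{[0]}·D(A) generated by D(A)_{[0]} equals D(A)*A + D(A)_{[0]} and is the least two-sided ideal of D(A) containing D(A)_{[0]}; (iii) D(A)*A = A ∩ D(A)·D(A)_{[0]}·D(A) is a D(A)-stable ideal of A. -/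

import Mathlib

/-!
Every differential operator splits as `u = u(1) + (u - u(1))` with `u - u(1) ∈ D(A)_{[0]}`, and
more generally `u·a - u(a) ∈ D(A)_{[0]}` for `a ∈ A`. Hence a two-sided ideal `I ⊇ D(A)_{[0]}`
contains `u(b)` (as a multiplication operator) for every `u ∈ I`, and so
`I = {u ∈ D(A) : u(1) ∈ I ∩ A}`. Conversely, for a `D(A)`-stable `𝔞 ⊇ D(A)*A` the set
`{u ∈ D(A) : u(1) ∈ 𝔞}` is closed under right multiplication because
`u(b) = u(1)·b + (u - u(1))(b)` with the last term in `D(A)*A`. Applying both directions to the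
ideal generated by `D(A)_{[0]}` identifies its trace on `A` with `D(A)*A`.
-/

/-- `DO K A i` is the set of differential operators on `A` of order `≤ i`. -/
def DO (K A : Type*) [CommSemiring K] [CommRing A] [Algebra K A] :
    ℕ → Set (Module.End K A)
  | 0 => {u | ∀ r : A, Algebra.lmul K A r * u = u * Algebra.lmul K A r}
  | i + 1 => {u | ∀ r : A, Algebra.lmul K A r * u - u * Algebra.lmul K A r ∈ DO K A i}

/-- `I` is a two-sided ideal of the (sub)ring with carrier set `S`. -/
def IsIdl {E : Type*} [Ring E] (S I : Set E) : Prop :=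
  I ⊆ S ∧ (0 : E) ∈ I ∧ (∀ x ∈ I, ∀ y ∈ I, x + y ∈ I) ∧ (∀ x ∈ I, -x ∈ I) ∧
    ∀ t ∈ S, ∀ x ∈ I, t * x ∈ I ∧ x * t ∈ I

section Commutator

variable {R : Type*} [Ring R]

theorem mul_add_sub_add_mul (r u v : R) :
    r * (u + v) - (u + v) * r = (r * u - u * r) + (r * v - v * r) := by
  noncomm_ring

theorem mul_neg_sub_neg_mul (r u : R) : r * -u - -u * r = -(r * u - u * r) := by
  noncomm_ring

theorem mul_mul_sub_mul_mul (r u v : R) :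
    r * (u * v) - u * v * r = (r * u - u * r) * v + u * (r * v - v * r) := by
  noncomm_ring

end Commutator

section DifferentialOperators

variable {K A : Type*} [CommSemiring K] [CommRing A] [Algebra K A]

theorem zero_mem_DO : ∀ i, (0 : Module.End K A) ∈ DO K A i
  | 0 => fun _ => by simp
  | i + 1 => fun _ => by simpa using zero_mem_DO i

theorem add_mem_DO : ∀ {i : ℕ} {u v : Module.End K A},
    u ∈ DO K A i → v ∈ DO K A i → u + v ∈ DO K A i
  | 0, _, _, hu, hv => fun r => by rw [mul_add, add_mul, hu r, hv r]
  | _ + 1, u, v, hu, hv => fun r =>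
    (mul_add_sub_add_mul _ u v).symm ▸ add_mem_DO (hu r) (hv r)

theorem neg_mem_DO : ∀ {i : ℕ} {u : Module.End K A}, u ∈ DO K A i → -u ∈ DO K A i
  | 0, u, hu => fun r => by
    rw [← sub_eq_zero, mul_neg_sub_neg_mul, sub_eq_zero.2 (hu r), neg_zero]
  | _ + 1, u, hu => fun r => (mul_neg_sub_neg_mul _ u).symm ▸ neg_mem_DO (hu r)

theorem DO_subset_DO_succ : ∀ i, DO K A i ⊆ DO K A (i + 1)
  | 0 => fun _ hu r => (sub_eq_zero.2 (hu r)).symm ▸ zero_mem_DO 0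
  | i + 1 => fun _ hu r => DO_subset_DO_succ i (hu r)

theorem monotone_DO : Monotone (DO K A) :=
  monotone_nat_of_le_succ DO_subset_DO_succ

theorem mul_mem_DO {i j : ℕ} {u v : Module.End K A} (hu : u ∈ DO K A i) (hv : v ∈ DO K A j) :
    u * v ∈ DO K A (i + j) := by
  induction i generalizing j u v with
  | zero =>
    induction j generalizing v with
    | zero => intro r; rw [← mul_assoc, hu r, mul_assoc, hv r, mul_assoc]
    | succ j ih =>
      intro r
      rw [mul_mul_sub_mul_mul, sub_eq_zero.2 (hu r), zero_mul, zero_add]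
      exact ih (hv r)
  | succ i ihi =>
    induction j generalizing v with
    | zero =>
      intro r
      rw [mul_mul_sub_mul_mul, sub_eq_zero.2 (hv r), mul_zero, add_zero]
      exact ihi (hu r) hv
    | succ j ihj =>
      intro r
      have hleft : _ ∈ DO K A (i + 1 + j) := Nat.add_right_comm i 1 j ▸ ihi (hu r) hv
      rw [mul_mul_sub_mul_mul]
      exact add_mem_DO hleft (ihj (hv r))

theorem lmul_mem_DO_zero (a : A) : Algebra.lmul K A a ∈ DO K A 0 := fun r =>
  ((Commute.all r a).map (Algebra.lmul K A)).eq

theorem one_mem_DO_zero : (1 : Module.End K A) ∈ DO K A 0 := fun _ =>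
  (Commute.one_right _).eq

variable (K A) in
def diffOps : Subring (Module.End K A) where
  carrier := ⋃ i, DO K A i
  mul_mem' {u v} hu hv := by
    obtain ⟨i, hu⟩ := Set.mem_iUnion.1 hu
    obtain ⟨j, hv⟩ := Set.mem_iUnion.1 hv
    exact Set.mem_iUnion.2 ⟨i + j, mul_mem_DO hu hv⟩
  add_mem' {u v} hu hv := by
    obtain ⟨i, hu⟩ := Set.mem_iUnion.1 hu
    obtain ⟨j, hv⟩ := Set.mem_iUnion.1 hv
    exact Set.mem_iUnion.2 ⟨max i j,
      add_mem_DO (monotone_DO (le_max_left i j) hu) (monotone_DO (le_max_right i j) hv)⟩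
  one_mem' := Set.mem_iUnion.2 ⟨0, one_mem_DO_zero⟩
  zero_mem' := Set.mem_iUnion.2 ⟨0, zero_mem_DO 0⟩
  neg_mem' {u} hu := by
    obtain ⟨i, hu⟩ := Set.mem_iUnion.1 hu
    exact Set.mem_iUnion.2 ⟨i, neg_mem_DO hu⟩

theorem lmul_mem_diffOps (a : A) : Algebra.lmul K A a ∈ diffOps K A :=
  Set.mem_iUnion.2 ⟨0, lmul_mem_DO_zero a⟩

end DifferentialOperators

section IsIdl

variable {E : Type*} [Ring E] {S I : Set E}

theorem IsIdl.mul_mem_left (hI : IsIdl S I) {t x : E} (ht : t ∈ S) (hx : x ∈ I) : t * x ∈ I :=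
  (hI.2.2.2.2 t ht x hx).1

theorem IsIdl.mul_mem_right (hI : IsIdl S I) {t x : E} (ht : t ∈ S) (hx : x ∈ I) : x * t ∈ I :=
  (hI.2.2.2.2 t ht x hx).2

def IsIdl.toAddSubgroup (hI : IsIdl S I) : AddSubgroup E where
  carrier := I
  zero_mem' := hI.2.1
  add_mem' ha hb := hI.2.2.1 _ ha _ hb
  neg_mem' := hI.2.2.2.1 _

end IsIdl

section Annihilator

variable {K A : Type*} [CommSemiring K] [CommRing A] [Algebra K A]

variable (K A) in
/-- `D(A)_{[0]}` -/
def diffOpsAnnOne : Set (Module.End K A) := {u | u ∈ diffOps K A ∧ u 1 = 0}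

theorem mul_mem_diffOpsAnnOne {t d : Module.End K A} (ht : t ∈ diffOps K A)
    (hd : d ∈ diffOpsAnnOne K A) : t * d ∈ diffOpsAnnOne K A :=
  ⟨mul_mem ht hd.1, by rw [Module.End.mul_apply, hd.2, map_zero]⟩

theorem mul_lmul_sub_lmul_apply_mem_diffOpsAnnOne {u : Module.End K A} (hu : u ∈ diffOps K A)
    (a : A) : u * Algebra.lmul K A a - Algebra.lmul K A (u a) ∈ diffOpsAnnOne K A :=
  ⟨sub_mem (mul_mem hu (lmul_mem_diffOps a)) (lmul_mem_diffOps _), by simp⟩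

theorem sub_lmul_apply_one_mem_diffOpsAnnOne {u : Module.End K A} (hu : u ∈ diffOps K A) :
    u - Algebra.lmul K A (u 1) ∈ diffOpsAnnOne K A := by
  simpa only [map_one, mul_one] using mul_lmul_sub_lmul_apply_mem_diffOpsAnnOne hu 1

variable (K A) in
/-- `𝔞 + D(A)_{[0]}` -/
def addDiffOpsAnnOne (s : Set A) : Set (Module.End K A) :=
  {x | ∃ a ∈ s, ∃ d ∈ diffOpsAnnOne K A, x = Algebra.lmul K A a + d}

theorem mem_addDiffOpsAnnOne {s : Set A} {x : Module.End K A} :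
    x ∈ addDiffOpsAnnOne K A s ↔ x ∈ diffOps K A ∧ x 1 ∈ s := by
  constructor
  · rintro ⟨a, ha, d, hd, rfl⟩
    exact ⟨add_mem (lmul_mem_diffOps a) hd.1, by simpa [hd.2] using ha⟩
  · rintro ⟨hx, hx1⟩
    exact ⟨x 1, hx1, _, sub_lmul_apply_one_mem_diffOpsAnnOne hx, (add_sub_cancel _ _).symm⟩

theorem lmul_mem_addDiffOpsAnnOne {s : Set A} {a : A} :
    Algebra.lmul K A a ∈ addDiffOpsAnnOne K A s ↔ a ∈ s := by
  rw [mem_addDiffOpsAnnOne, and_iff_right (lmul_mem_diffOps a)]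
  simp

theorem diffOpsAnnOne_subset_addDiffOpsAnnOne {s : Set A} (hs : 0 ∈ s) :
    diffOpsAnnOne K A ⊆ addDiffOpsAnnOne K A s := fun _ hd =>
  mem_addDiffOpsAnnOne.2 ⟨hd.1, hd.2 ▸ hs⟩

end Annihilator

section StableIdeals

variable {K A : Type*} [CommSemiring K] [CommRing A] [Algebra K A]

variable (K A) in
def IsDiffOpsStable (s : Set A) : Prop := ∀ u ∈ diffOps K A, ∀ a ∈ s, u a ∈ s

/-- Multiplication operators lie in `D(A)`, so a `D(A)`-stable additive subgroup is an ideal. -/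
def idealOfDiffOpsStable (s : AddSubgroup A) (hs : IsDiffOpsStable K A s) : Ideal A where
  toAddSubmonoid := s.toAddSubmonoid
  smul_mem' c a ha := by
    simpa using hs _ (lmul_mem_diffOps (K := K) c) a ha

variable (K A) in
/-- `D(A)*A` -/
def diffOpsAnnOneRangeSpan : AddSubgroup A :=
  AddSubgroup.closure {x | ∃ u ∈ diffOpsAnnOne K A, ∃ a : A, x = u a}

theorem apply_mem_diffOpsAnnOneRangeSpan {d : Module.End K A} (hd : d ∈ diffOpsAnnOne K A)
    (a : A) : d a ∈ diffOpsAnnOneRangeSpan K A :=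
  AddSubgroup.subset_closure ⟨d, hd, a, rfl⟩

theorem isDiffOpsStable_diffOpsAnnOneRangeSpan :
    IsDiffOpsStable K A (diffOpsAnnOneRangeSpan K A) := by
  intro u hu a ha
  induction ha using AddSubgroup.closure_induction with
  | mem x hx =>
    obtain ⟨d, hd, b, rfl⟩ := hx
    exact apply_mem_diffOpsAnnOneRangeSpan (mul_mem_diffOpsAnnOne hu hd) b
  | zero => simp
  | add x y _ _ hx hy => simpa using add_mem hx hy
  | neg x _ hx => simpa using neg_mem hx

end StableIdeals

section Correspondence

variable {K A : Type*} [CommSemiring K] [CommRing A] [Algebra K A]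

theorem apply_mem_of_mem_addDiffOpsAnnOne {s : AddSubgroup A} (hs : IsDiffOpsStable K A s)
    (hsub : (diffOpsAnnOneRangeSpan K A : Set A) ⊆ s) {x : Module.End K A}
    (hx : x ∈ addDiffOpsAnnOne K A s) (b : A) : x b ∈ s := by
  obtain ⟨a, ha, d, hd, rfl⟩ := hx
  have hab : b * a ∈ s := by simpa using hs _ (lmul_mem_diffOps (K := K) b) a ha
  simpa [mul_comm] using add_mem hab (hsub (apply_mem_diffOpsAnnOneRangeSpan hd b))

theorem isIdl_addDiffOpsAnnOne {s : AddSubgroup A} (hs : IsDiffOpsStable K A s)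
    (hsub : (diffOpsAnnOneRangeSpan K A : Set A) ⊆ s) :
    IsIdl (diffOps K A) (addDiffOpsAnnOne K A s) := by
  simp only [IsIdl, Set.subset_def, mem_addDiffOpsAnnOne]
  refine ⟨fun x hx => hx.1, ⟨zero_mem _, by simp⟩, fun x hx y hy => ?_, fun x hx => ?_,
    fun t ht x hx => ⟨?_, ?_⟩⟩
  · exact ⟨add_mem hx.1 hy.1, by simpa using add_mem hx.2 hy.2⟩
  · exact ⟨neg_mem hx.1, by simpa using neg_mem hx.2⟩
  · exact ⟨mul_mem ht hx.1, hs t ht _ hx.2⟩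
  · exact ⟨mul_mem hx.1 ht,
      apply_mem_of_mem_addDiffOpsAnnOne hs hsub (mem_addDiffOpsAnnOne.2 hx) (t 1)⟩

variable {I : Set (Module.End K A)}

theorem lmul_apply_mem_of_isIdl (hI : IsIdl (diffOps K A) I) (hD0 : diffOpsAnnOne K A ⊆ I)
    {x : Module.End K A} (hx : x ∈ I) (b : A) : Algebra.lmul K A (x b) ∈ I := by
  have hxb : x * Algebra.lmul K A b ∈ I := hI.mul_mem_right (lmul_mem_diffOps b) hx
  have hcomm := hD0 (mul_lmul_sub_lmul_apply_mem_diffOpsAnnOne (hI.1 hx) b)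
  have := hI.toAddSubgroup.sub_mem hxb hcomm
  rwa [sub_sub_cancel] at this

/-- `I ∩ A` -/
def IsIdl.lmulComap (hI : IsIdl (diffOps K A) I) : AddSubgroup A :=
  hI.toAddSubgroup.comap (Algebra.lmul K A : A →+ Module.End K A)

theorem IsIdl.isDiffOpsStable_lmulComap (hI : IsIdl (diffOps K A) I)
    (hD0 : diffOpsAnnOne K A ⊆ I) : IsDiffOpsStable K A hI.lmulComap := fun u hu a ha => by
  show Algebra.lmul K A (u a) ∈ I
  simpa using lmul_apply_mem_of_isIdl hI hD0 (hI.mul_mem_left hu ha) 1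

theorem IsIdl.diffOpsAnnOneRangeSpan_le_lmulComap (hI : IsIdl (diffOps K A) I)
    (hD0 : diffOpsAnnOne K A ⊆ I) : diffOpsAnnOneRangeSpan K A ≤ hI.lmulComap := by
  rw [diffOpsAnnOneRangeSpan, AddSubgroup.closure_le]
  rintro _ ⟨d, hd, b, rfl⟩
  exact lmul_apply_mem_of_isIdl hI hD0 (hD0 hd) b

theorem IsIdl.eq_addDiffOpsAnnOne (hI : IsIdl (diffOps K A) I) (hD0 : diffOpsAnnOne K A ⊆ I) :
    I = addDiffOpsAnnOne K A {r | Algebra.lmul K A r ∈ I} := by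
  ext x
  rw [mem_addDiffOpsAnnOne]
  refine ⟨fun hx => ⟨hI.1 hx, lmul_apply_mem_of_isIdl hI hD0 hx 1⟩, fun ⟨hx, hx1⟩ => ?_⟩
  have := hI.toAddSubgroup.add_mem hx1 (hD0 (sub_lmul_apply_one_mem_diffOpsAnnOne hx))
  rwa [add_sub_cancel] at this

end Correspondence

section TwoSidedSpan

variable {K A : Type*} [CommSemiring K] [CommRing A] [Algebra K A]

variable (K A) in
/-- `D(A)·D(A)_{[0]}·D(A)` -/
def diffOpsAnnOneTwoSidedSpan : AddSubgroup (Module.End K A) :=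
  AddSubgroup.closure
    {x | ∃ u ∈ diffOps K A, ∃ d ∈ diffOpsAnnOne K A, ∃ v ∈ diffOps K A, x = u * d * v}

theorem isIdl_diffOpsAnnOneTwoSidedSpan :
    IsIdl (diffOps K A) (diffOpsAnnOneTwoSidedSpan K A : Set (Module.End K A)) := by
  refine ⟨?_, zero_mem _, fun _ hx _ hy => add_mem hx hy, fun _ hx => neg_mem hx,
    fun t ht x hx => ⟨?_, ?_⟩⟩
  · refine (AddSubgroup.closure_le (diffOps K A).toAddSubgroup).2 ?_
    rintro _ ⟨u, hu, d, hd, v, hv, rfl⟩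
    exact (diffOps K A).mul_mem ((diffOps K A).mul_mem hu hd.1) hv
  · refine (AddSubgroup.closure_le
      ((diffOpsAnnOneTwoSidedSpan K A).comap (AddMonoidHom.mulLeft t))).2 ?_ hx
    rintro _ ⟨u, hu, d, hd, v, hv, rfl⟩
    exact AddSubgroup.subset_closure
      ⟨t * u, mul_mem ht hu, d, hd, v, hv, by simp only [AddMonoidHom.coe_mulLeft, mul_assoc]⟩
  · refine (AddSubgroup.closure_le
      ((diffOpsAnnOneTwoSidedSpan K A).comap (AddMonoidHom.mulRight t))).2 ?_ hx
    rintro _ ⟨u, hu, d, hd, v, hv, rfl⟩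
    exact AddSubgroup.subset_closure
      ⟨u, hu, d, hd, v * t, mul_mem hv ht, by simp only [AddMonoidHom.coe_mulRight, mul_assoc]⟩

theorem diffOpsAnnOne_subset_diffOpsAnnOneTwoSidedSpan :
    diffOpsAnnOne K A ⊆ diffOpsAnnOneTwoSidedSpan K A := fun d hd =>
  AddSubgroup.subset_closure ⟨1, one_mem _, d, hd, 1, one_mem _, by simp⟩

theorem diffOpsAnnOneTwoSidedSpan_subset_of_isIdl {I : Set (Module.End K A)}
    (hI : IsIdl (diffOps K A) I) (hD0 : diffOpsAnnOne K A ⊆ I) :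
    (diffOpsAnnOneTwoSidedSpan K A : Set (Module.End K A)) ⊆ I := by
  refine (AddSubgroup.closure_le hI.toAddSubgroup).2 ?_
  rintro _ ⟨u, hu, d, hd, v, hv, rfl⟩
  exact hI.mul_mem_right hv (hI.mul_mem_left hu (hD0 hd))

theorem lmul_mem_diffOpsAnnOneTwoSidedSpan_iff {r : A} :
    Algebra.lmul K A r ∈ diffOpsAnnOneTwoSidedSpan K A ↔ r ∈ diffOpsAnnOneRangeSpan K A := by
  refine ⟨fun hr => ?_, fun hr => ?_⟩
  · exact lmul_mem_addDiffOpsAnnOne.1 (diffOpsAnnOneTwoSidedSpan_subset_of_isIdl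
      (isIdl_addDiffOpsAnnOne isDiffOpsStable_diffOpsAnnOneRangeSpan subset_rfl)
      (diffOpsAnnOne_subset_addDiffOpsAnnOne (zero_mem _)) hr)
  · exact (isIdl_diffOpsAnnOneTwoSidedSpan (K := K)).diffOpsAnnOneRangeSpan_le_lmulComap
      diffOpsAnnOne_subset_diffOpsAnnOneTwoSidedSpan hr

theorem coe_diffOpsAnnOneTwoSidedSpan :
    (diffOpsAnnOneTwoSidedSpan K A : Set (Module.End K A)) =
      addDiffOpsAnnOne K A (diffOpsAnnOneRangeSpan K A) :=
  calc (diffOpsAnnOneTwoSidedSpan K A : Set (Module.End K A))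
      = addDiffOpsAnnOne K A {r | Algebra.lmul K A r ∈ diffOpsAnnOneTwoSidedSpan K A} :=
        (isIdl_diffOpsAnnOneTwoSidedSpan (K := K)).eq_addDiffOpsAnnOne
          diffOpsAnnOne_subset_diffOpsAnnOneTwoSidedSpan
    _ = addDiffOpsAnnOne K A (diffOpsAnnOneRangeSpan K A) :=
        congrArg _ (Set.ext fun _ => lmul_mem_diffOpsAnnOneTwoSidedSpan_iff)

end TwoSidedSpan

/-- Let `A` be a commutative `K`-algebra, `D(A)_{[0]} = {δ ∈ D(A) : δ(1) = 0}` and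
`D(A)*A = {Σ_j δ_j(a_j) : δ_j ∈ D(A)_{[0]}, a_j ∈ A}`.  Then:
(i) `𝔞 ↦ 𝔞 + D(A)_{[0]}` is a bijection from the `D(A)`-stable ideals of `A` containing
`D(A)*A` onto the two-sided ideals of `D(A)` containing `D(A)_{[0]}`, with inverse
`I ↦ I ∩ A`;
(ii) `D(A)·D(A)_{[0]}·D(A) = D(A)*A + D(A)_{[0]}` and it is the least two-sided ideal of
`D(A)` containing `D(A)_{[0]}`;
(iii) `D(A)*A = A ∩ D(A)·D(A)_{[0]}·D(A)` is a `D(A)`-stable ideal of `A`. -/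
theorem ideals_containing_annihilator_of_one
    {K A : Type*} [Field K] [CommRing A] [Algebra K A]
    (DA : Set (Module.End K A)) (hDA : DA = ⋃ i, DO K A i)
    -- `D(A)_{[0]}`, the annihilator of `1 ∈ A`:
    (D0 : Set (Module.End K A)) (hD0 : D0 = {u | u ∈ DA ∧ u 1 = 0})
    -- `D(A)*A`, the set of finite sums `Σ δ_j(a_j)` with `δ_j ∈ D(A)_{[0]}`:
    (Dstar : Set A)
    (hDstar : Dstar = (AddSubgroup.closure {x : A | ∃ u ∈ D0, ∃ a : A, x = u a} :
      AddSubgroup A))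
    -- `D(A)·D(A)_{[0]}·D(A)`, the two-sided ideal of `D(A)` generated by `D(A)_{[0]}`:
    (DD0D : Set (Module.End K A))
    (hDD0D : DD0D = (AddSubgroup.closure
      {x : Module.End K A | ∃ u ∈ DA, ∃ d ∈ D0, ∃ v ∈ DA, x = u * d * v} :
        AddSubgroup (Module.End K A))) :
    -- (i) the map `𝔞 ↦ 𝔞 + D(A)_{[0]}`:
    (∀ 𝔞 : Ideal A, (∀ u ∈ DA, ∀ a ∈ 𝔞, u a ∈ 𝔞) → Dstar ⊆ (𝔞 : Set A) →
      IsIdl DA {x | ∃ a ∈ 𝔞, ∃ d ∈ D0, x = Algebra.lmul K A a + d} ∧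
      D0 ⊆ {x | ∃ a ∈ 𝔞, ∃ d ∈ D0, x = Algebra.lmul K A a + d} ∧
      {r : A | Algebra.lmul K A r ∈ {x | ∃ a ∈ 𝔞, ∃ d ∈ D0, x = Algebra.lmul K A a + d}}
        = (𝔞 : Set A)) ∧
    -- (i) its inverse `I ↦ I ∩ A`:
    (∀ I : Set (Module.End K A), IsIdl DA I → D0 ⊆ I →
      ∃ 𝔞 : Ideal A, (𝔞 : Set A) = {r : A | Algebra.lmul K A r ∈ I} ∧
        (∀ u ∈ DA, ∀ a ∈ 𝔞, u a ∈ 𝔞) ∧ Dstar ⊆ (𝔞 : Set A) ∧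
        I = {x | ∃ a ∈ 𝔞, ∃ d ∈ D0, x = Algebra.lmul K A a + d}) ∧
    -- (ii) `D(A)·D(A)_{[0]}·D(A) = D(A)*A + D(A)_{[0]}` …
    DD0D = {x | ∃ s ∈ Dstar, ∃ d ∈ D0, x = Algebra.lmul K A s + d} ∧
    -- … and it is the least two-sided ideal of `D(A)` containing `D(A)_{[0]}`:
    (IsIdl DA DD0D ∧ D0 ⊆ DD0D ∧
      ∀ I : Set (Module.End K A), IsIdl DA I → D0 ⊆ I → DD0D ⊆ I) ∧
    -- (iii) `D(A)*A = A ∩ D(A)·D(A)_{[0]}·D(A)` is a `D(A)`-stable ideal of `A`: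
    (Dstar = {r : A | Algebra.lmul K A r ∈ DD0D} ∧
      (∃ J : Ideal A, (J : Set A) = Dstar) ∧
      ∀ u ∈ DA, ∀ a ∈ Dstar, u a ∈ Dstar) := by
  obtain rfl : DA = diffOps K A := hDA
  obtain rfl : D0 = diffOpsAnnOne K A := hD0
  obtain rfl : Dstar = diffOpsAnnOneRangeSpan K A := hDstar
  obtain rfl : DD0D = diffOpsAnnOneTwoSidedSpan K A := hDD0D
  have hstab := isDiffOpsStable_diffOpsAnnOneRangeSpan (K := K) (A := A)
  refine ⟨fun 𝔞 h𝔞 hsub => ⟨isIdl_addDiffOpsAnnOne (s := 𝔞.toAddSubgroup) h𝔞 hsub,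
      diffOpsAnnOne_subset_addDiffOpsAnnOne 𝔞.zero_mem,
      Set.ext fun _ => lmul_mem_addDiffOpsAnnOne⟩,
    fun I hI hD0 => ⟨idealOfDiffOpsStable _ (hI.isDiffOpsStable_lmulComap hD0), rfl,
      hI.isDiffOpsStable_lmulComap hD0, hI.diffOpsAnnOneRangeSpan_le_lmulComap hD0,
      hI.eq_addDiffOpsAnnOne hD0⟩,
    coe_diffOpsAnnOneTwoSidedSpan,
    ⟨isIdl_diffOpsAnnOneTwoSidedSpan, diffOpsAnnOne_subset_diffOpsAnnOneTwoSidedSpan,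
      fun _ => diffOpsAnnOneTwoSidedSpan_subset_of_isIdl⟩,
    (Set.ext fun _ => lmul_mem_diffOpsAnnOneTwoSidedSpan_iff).symm,
    ⟨idealOfDiffOpsStable _ hstab, rfl⟩, hstab⟩
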